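/- Let A ⊇ {0,1}. For distinct subsets U, V ⊆ ℕ, the clonoids with target algebra B = ({0,1}, ↛) generated by F_U and F_V are distinct: ⟨F_U⟩_B ≠ ⟨F_V⟩_B. Consequently, there are continuum many clonoids with source A and target ({0,1}, ↛). -/

import Mathlib

/-- The minor of `f : A^k → B` along `σ : [k] → [ℓ]`. -/
def Minor {A B : Type*} {k l : ℕ} (f : (Fin k → A) → B) (σ : Fin k → Fin l) :
    (Fin l → A) → B := fun x => f (fun i => x (σ i))

/-- `f` preserves the relational pair `(P, Q)`. -/
def Preserves {A B : Type*} {k m : ℕ} (f : (Fin k → A) → B)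
    (P : Set (Fin m → A)) (Q : Set (Fin m → B)) : Prop :=
  ∀ p : Fin k → (Fin m → A), (∀ j, p j ∈ P) →
    (fun i => f (fun j => p j i)) ∈ Q

/-- `P_n`: tuples with exactly one coordinate equal to `1` and all others `0`. -/
def Prel (A : Type*) [Zero A] [One A] (n : ℕ) : Set (Fin n → A) :=
  {x | ∃ i, x i = 1 ∧ ∀ j, j ≠ i → x j = 0}

/-- `Q_n := {0,1}^n \ {(1,…,1)}`, with `{0,1}` rendered as `Bool`. -/
def QrelB (n : ℕ) : Set (Fin n → Bool) :=
  {y | y ≠ fun _ => true}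

/-- `f_k : A^k → {0,1}`, the indicator function of `P_k`, with values in `Bool`. -/
def fkB (A : Type*) [Zero A] [One A] [DecidableEq A] (k : ℕ) : (Fin k → A) → Bool :=
  fun x => decide (∃ i, x i = 1 ∧ ∀ j, j ≠ i → x j = 0)

/-- The family `F_U = {f_k : k ∈ U}` (at arity `n` it contains `f_n` iff `n ∈ U`). -/
def FUfam (A : Type*) [Zero A] [One A] [DecidableEq A] (U : Set ℕ) :
    (n : ℕ) → Set ((Fin n → A) → Bool) :=
  fun n => {g | n ∈ U ∧ g = fkB A n}

/-- A clonoid with source `A` and target algebra `B = ({0,1}, ↛)` where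
`x ↛ y := x ∧ ¬y`: closed under minors and pointwise `↛`. -/
def IsClonoidNimp (A : Type*) (C : (n : ℕ) → Set ((Fin n → A) → Bool)) : Prop :=
  (∀ k l (σ : Fin k → Fin l) f, f ∈ C k → Minor f σ ∈ C l) ∧
  (∀ k f g, f ∈ C k → g ∈ C k → (fun x => f x && !(g x)) ∈ C k)

/-- The clonoid with target `({0,1}, ↛)` generated by the family `F`. -/
def GenNimp {A : Type*} (F : (n : ℕ) → Set ((Fin n → A) → Bool)) :
    (k : ℕ) → Set ((Fin k → A) → Bool) :=
  fun k => {f | ∀ C : (n : ℕ) → Set ((Fin n → A) → Bool),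
      IsClonoidNimp A C → (∀ n, F n ⊆ C n) → f ∈ C k}

/-!
For each `n`, the functions preserving `(P_n, Q_n)` form a clonoid with target `({0,1}, ↛)`:
if `f` and `g` avoid the all-ones column, so does `f ↛ g`. A tuple of `k` rows from `P_n` whose
columns all lie in `P_k` is a permutation matrix, which forces `k = n`; so `f_k` lies in this
clonoid exactly when `k ≠ n`. Hence `n ∈ U \ V` separates `⟨F_U⟩_B` from `⟨F_V⟩_B`, and
`U ↦ ⟨F_U⟩_B` embeds `Set ℕ` into the clonoids, of which there are at most `𝔠` when `A` is finite.
-/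

open Cardinal

def preservers (A : Type*) [Zero A] [One A] (n : ℕ) : (k : ℕ) → Set ((Fin k → A) → Bool) :=
  fun _ => {f | Preserves f (Prel A n) (QrelB n)}

section Preservers

variable {A : Type*} [Zero A] [One A]

theorem isClonoidNimp_preservers (n : ℕ) : IsClonoidNimp A (preservers A n) := by
  refine ⟨fun k l σ f hf p hp => hf (fun j => p (σ j)) (fun j => hp (σ j)), ?_⟩
  intro k f g hf _ p hp hall
  refine hf p hp (funext fun i => ?_)
  have hi := congrFun hall i
  simp only [Bool.and_eq_true, Bool.not_eq_true'] at hi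
  exact hi.1

theorem fkB_mem_preservers_of_ne [DecidableEq A] (h10 : (1 : A) ≠ 0) {k n : ℕ} (hkn : k ≠ n) :
    fkB A k ∈ preservers A n k := by
  intro p hp hall
  have hcol : ∀ i, ∃ j, p j i = 1 ∧ ∀ j', j' ≠ j → p j' i = 0 := fun i => by
    simpa [fkB] using congrFun hall i
  choose φ hφ1 hφ2 using hp
  choose ψ hψ1 hψ2 using hcol
  -- the `1`s of `p` sit at the entries `(j, φ j)` and at `(ψ i, i)`, so `φ` and `ψ` are inverse
  have hψφ : ∀ j, ψ (φ j) = j := fun j => by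
    by_contra hne
    exact h10 (hφ1 j ▸ hψ2 (φ j) j (Ne.symm hne))
  have hφψ : ∀ i, φ (ψ i) = i := fun i => by
    by_contra hne
    exact h10 (hψ1 i ▸ hφ2 (ψ i) i (Ne.symm hne))
  exact hkn (Fin.equiv_iff_eq.mp ⟨⟨φ, ψ, hψφ, hφψ⟩⟩)

theorem fkB_notMem_preservers_self [DecidableEq A] (n : ℕ) : fkB A n ∉ preservers A n n := by
  intro h
  refine h (fun j i => if i = j then 1 else 0) (fun j => ⟨j, by simp, fun i hi => by simp [hi]⟩) ?_
  funext i
  simp only [fkB, decide_eq_true_eq]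
  exact ⟨i, by simp, fun j hj => by simp [Ne.symm hj]⟩

end Preservers

section Generated

variable {A : Type*}

theorem isClonoidNimp_genNimp (F : (n : ℕ) → Set ((Fin n → A) → Bool)) :
    IsClonoidNimp A (GenNimp F) :=
  ⟨fun k l σ f hf C hC hFC => hC.1 k l σ f (hf C hC hFC),
    fun k f g hf hg C hC hFC => hC.2 k f g (hf C hC hFC) (hg C hC hFC)⟩

theorem subset_genNimp (F : (n : ℕ) → Set ((Fin n → A) → Bool)) (n : ℕ) :
    F n ⊆ GenNimp F n :=
  fun _ hf _ _ hFC => hFC n hf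

theorem genNimp_subset {F C : (n : ℕ) → Set ((Fin n → A) → Bool)} (hC : IsClonoidNimp A C)
    (hFC : ∀ n, F n ⊆ C n) (k : ℕ) : GenNimp F k ⊆ C k :=
  fun _ hf => hf C hC hFC

end Generated

section FUfam

variable {A : Type*} [Zero A] [One A] [DecidableEq A]

theorem genNimp_FUfam_ne_of_mem_of_notMem (h10 : (1 : A) ≠ 0) {U V : Set ℕ} {n : ℕ}
    (hnU : n ∈ U) (hnV : n ∉ V) : GenNimp (FUfam A U) ≠ GenNimp (FUfam A V) := by
  intro heq
  have hmem : fkB A n ∈ GenNimp (FUfam A V) n := heq ▸ subset_genNimp _ n ⟨hnU, rfl⟩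
  have hV : ∀ m, FUfam A V m ⊆ preservers A n m := by
    rintro m _ ⟨hmV, rfl⟩
    exact fkB_mem_preservers_of_ne h10 fun h => hnV (h ▸ hmV)
  exact fkB_notMem_preservers_self n (genNimp_subset (isClonoidNimp_preservers n) hV n hmem)

theorem genNimp_FUfam_injective (h10 : (1 : A) ≠ 0) :
    Function.Injective fun U : Set ℕ => GenNimp (FUfam A U) := by
  intro U V heq
  ext n
  constructor
  · exact fun hnU => by_contra fun hnV => genNimp_FUfam_ne_of_mem_of_notMem h10 hnU hnV heq
  · exact fun hnV => by_contra fun hnU => genNimp_FUfam_ne_of_mem_of_notMem h10 hnV hnU heq.symm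

theorem continuum_le_mk_isClonoidNimp (h10 : (1 : A) ≠ 0) :
    𝔠 ≤ #{C : (n : ℕ) → Set ((Fin n → A) → Bool) // IsClonoidNimp A C} := by
  have hinj : Function.Injective fun U : Set ℕ =>
      (⟨GenNimp (FUfam A U), isClonoidNimp_genNimp _⟩ : {C // IsClonoidNimp A C}) :=
    fun _ _ h => genNimp_FUfam_injective h10 (congrArg Subtype.val h)
  simpa using lift_mk_le_lift_mk_of_injective hinj

end FUfam

theorem Cardinal.mk_pi_set_le_continuum {ι : Type*} [Countable ι] (X : ι → Type*)
    [∀ i, Countable (X i)] : #((i : ι) → Set (X i)) ≤ 𝔠 :=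
  calc #((i : ι) → Set (X i))
      = #(Set (Σ i, X i)) := mk_congr (Equiv.piCurry fun _ _ => Prop).symm
    _ = 2 ^ #(Σ i, X i) := mk_set
    _ ≤ 2 ^ ℵ₀ := power_le_power_left two_ne_zero mk_le_aleph0
    _ = 𝔠 := two_power_aleph0

theorem mk_isClonoidNimp_le_continuum (A : Type*) [Finite A] :
    #{C : (n : ℕ) → Set ((Fin n → A) → Bool) // IsClonoidNimp A C} ≤ 𝔠 :=
  (mk_subtype_le _).trans (mk_pi_set_le_continuum _)

/-- Distinct subsets `U, V ⊆ ℕ` yield distinct clonoids `⟨F_U⟩_B ≠ ⟨F_V⟩_B`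
with target `B = ({0,1}, ↛)`; consequently there are continuum many clonoids
with source `A` and target `({0,1}, ↛)`. -/
theorem genNimp_distinct_and_continuum (d : ℕ) (hd : 1 ≤ d) :
    (∀ U V : Set ℕ, (∀ m ∈ U, 1 ≤ m) → (∀ m ∈ V, 1 ≤ m) → U ≠ V →
      GenNimp (FUfam (Fin (d+1)) U) ≠ GenNimp (FUfam (Fin (d+1)) V)) ∧
    Cardinal.mk {C : (n : ℕ) → Set ((Fin n → Fin (d+1)) → Bool) //
      IsClonoidNimp (Fin (d+1)) C} = Cardinal.continuum := by
  have h10 : (1 : Fin (d+1)) ≠ 0 := by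
    rw [Ne, Fin.one_eq_zero_iff]
    omega
  exact ⟨fun U V _ _ => (genNimp_FUfam_injective h10).ne,
    le_antisymm (mk_isClonoidNimp_le_continuum _) (continuum_le_mk_isClonoidNimp h10)⟩
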